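/- With ρ_AB, ρ_C, U as in the s₁₁ = 0 setting, if the partial transpose of ρ_ABC = U(ρ_AB ⊗ ρ_C)U† over qubit C is positive semidefinite, then the partial transpose of ρ_ABC over qubit A is also positive semidefinite. -/
import Mathlib


open Matrix Kronecker Complex ComplexOrder

noncomputable section

/-- Pauli X -/
def σX : Matrix (Fin 2) (Fin 2) ℂ := !![0, 1; 1, 0]
/-- Pauli Y -/
def σY : Matrix (Fin 2) (Fin 2) ℂ := !![0, -Complex.I; Complex.I, 0]
/-- Pauli Z -/
def σZ : Matrix (Fin 2) (Fin 2) ℂ := !![1, 0; 0, -1]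

/-- sign (-1)^a for a bit -/
def sgn (a : Bool) : ℝ := if a then -1 else 1

/-- three-qubit index type, qubit ordering (C, A, B) -/
abbrev Q3 := Fin 2 × Fin 2 × Fin 2

/-- the operator M_C ⊗ M_A ⊗ M_B on the three qubits ordered C, A, B -/
def op3 (MC MA MB : Matrix (Fin 2) (Fin 2) ℂ) : Matrix Q3 Q3 ℂ :=
  fun i j => MC i.1 j.1 * MA i.2.1 j.2.1 * MB i.2.2 j.2.2

/-- tensor product N_C ⊗ M_{AB} of a one-qubit operator (on C) with a two-qubit operator (on A,B) -/
def tensC_AB (N : Matrix (Fin 2) (Fin 2) ℂ)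
    (M : Matrix (Fin 2 × Fin 2) (Fin 2 × Fin 2) ℂ) : Matrix Q3 Q3 ℂ :=
  fun i j => N i.1 j.1 * M i.2 j.2

/-- partial transpose over qubit C -/
def ptC (M : Matrix Q3 Q3 ℂ) : Matrix Q3 Q3 ℂ := fun i j => M (j.1, i.2) (i.1, j.2)
/-- partial transpose over qubit A -/
def ptA (M : Matrix Q3 Q3 ℂ) : Matrix Q3 Q3 ℂ :=
  fun i j => M (i.1, (j.2.1, i.2.2)) (j.1, (i.2.1, j.2.2))
/-- partial transpose over qubit B -/
def ptB (M : Matrix Q3 Q3 ℂ) : Matrix Q3 Q3 ℂ :=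
  fun i j => M (i.1, (i.2.1, j.2.2)) (j.1, (j.2.1, i.2.2))

/-- partial transpose over the first qubit of a two-qubit operator -/
def pt1 (M : Matrix (Fin 2 × Fin 2) (Fin 2 × Fin 2) ℂ) : Matrix (Fin 2 × Fin 2) (Fin 2 × Fin 2) ℂ :=
  fun i j => M (j.1, i.2) (i.1, j.2)
/-- partial transpose over the second qubit of a two-qubit operator -/
def pt2 (M : Matrix (Fin 2 × Fin 2) (Fin 2 × Fin 2) ℂ) : Matrix (Fin 2 × Fin 2) (Fin 2 × Fin 2) ℂ :=
  fun i j => M (i.1, j.2) (j.1, i.2)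

/-- Bell-diagonal two-qubit operator (1/4)(I + s01 X⊗X + s10 Z⊗Z + s11 Y⊗Y) -/
def bellDiag (s01 s10 s11 : ℝ) : Matrix (Fin 2 × Fin 2) (Fin 2 × Fin 2) ℂ :=
  (1/4 : ℂ) • (1 + (s01 : ℂ) • (σX ⊗ₖ σX) + (s10 : ℂ) • (σZ ⊗ₖ σZ) + (s11 : ℂ) • (σY ⊗ₖ σY))

/-- single-qubit state (1/2)(I + s X) -/
def rhoC (s : ℝ) : Matrix (Fin 2) (Fin 2) ℂ := (1/2 : ℂ) • (1 + (s : ℂ) • σX)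

/-- controlled-phase gate between qubits C and A inside the three-qubit space -/
def CZCA : Matrix Q3 Q3 ℂ :=
  fun i j => if i = j then (if i.1 = 1 ∧ i.2.1 = 1 then -1 else 1) else 0
/-- controlled-phase gate between qubits A and B inside the three-qubit space -/
def CZAB : Matrix Q3 Q3 ℂ :=
  fun i j => if i = j then (if i.2.1 = 1 ∧ i.2.2 = 1 then -1 else 1) else 0

/-- lift of a two-qubit operator on (C,A) to the three-qubit space (identity on B) -/
def liftCA (V : Matrix (Fin 2 × Fin 2) (Fin 2 × Fin 2) ℂ) : Matrix Q3 Q3 ℂ :=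
  fun i j => V (i.1, i.2.1) (j.1, j.2.1) * (if i.2.2 = j.2.2 then 1 else 0)

/-- the state ρ_ABC = CZ_{AC} (ρ_C ⊗ ρ_AB) CZ_{AC} of the EDSS protocol -/
def rhoABC (s01 s10 s11 s : ℝ) : Matrix Q3 Q3 ℂ :=
  CZCA * tensC_AB (rhoC s) (bellDiag s01 s10 s11) * CZCA

/-- stabilizer K_C = X_C Z_A of the path graph C–A–B -/
def KC : Matrix Q3 Q3 ℂ := op3 σX σZ 1
/-- stabilizer K_A = Z_C X_A Z_B of the path graph C–A–B -/
def KA : Matrix Q3 Q3 ℂ := op3 σZ σX σZ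
/-- stabilizer K_B = Z_A X_B of the path graph C–A–B -/
def KB : Matrix Q3 Q3 ℂ := op3 1 σZ σX

/-- the vector |+⟩⊗|+⟩⊗|+⟩ -/
def plus3 : Q3 → ℂ := fun _ => ((1 : ℂ) / Real.sqrt 2) ^ 3

/-- the graph state of the three-vertex path C–A–B -/
def ψG : Q3 → ℂ := (CZCA * CZAB).mulVec plus3

/-- Z_x : product of Pauli-Z on the qubits indicated by the bit string x = (x_C, x_A, x_B) -/
def Zop (x : Bool × Bool × Bool) : Matrix Q3 Q3 ℂ :=
  op3 (if x.1 then σZ else 1) (if x.2.1 then σZ else 1) (if x.2.2 then σZ else 1)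

/-- the graph-state basis vector Z_x |ψ⟩ -/
def grState (x : Bool × Bool × Bool) : Q3 → ℂ := (Zop x).mulVec ψG

/-- K_x : product of the stabilizers indicated by the bit string x = (x_C, x_A, x_B) -/
def Kx (x : Bool × Bool × Bool) : Matrix Q3 Q3 ℂ :=
  (if x.1 then KC else 1) * (if x.2.1 then KA else 1) * (if x.2.2 then KB else 1)

lemma ptA_eq_ptC_ptB (M : Matrix Q3 Q3 ℂ) : ptA M = (ptC (ptB M))ᵀ := rfl

lemma ptB_tens (N : Matrix (Fin 2) (Fin 2) ℂ) (M : Matrix (Fin 2 × Fin 2) (Fin 2 × Fin 2) ℂ) :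
    ptB (tensC_AB N M) = tensC_AB N (pt2 M) := rfl

lemma pt2_bell (s01 s10 : ℝ) : pt2 (bellDiag s01 s10 0) = bellDiag s01 s10 0 := by
  ext ⟨i1, i2⟩ ⟨j1, j2⟩
  fin_cases i1 <;> fin_cases i2 <;> fin_cases j1 <;> fin_cases j2 <;>
    simp [pt2, bellDiag, σX, σY, σZ, kroneckerMap_apply, Matrix.one_apply, Prod.ext_iff]

set_option maxHeartbeats 1000000 in
lemma ptB_mul_left (V : Matrix (Fin 2 × Fin 2) (Fin 2 × Fin 2) ℂ) (M : Matrix Q3 Q3 ℂ) :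
    ptB (liftCA V * M) = liftCA V * ptB M := by
  ext ⟨i1, i2, i3⟩ ⟨j1, j2, j3⟩
  simp [ptB, liftCA, Matrix.mul_apply, Fintype.sum_prod_type, mul_ite, ite_mul,
    Finset.sum_ite_eq, Finset.sum_ite_eq']

set_option maxHeartbeats 1000000 in
lemma ptB_mul_right (V : Matrix (Fin 2 × Fin 2) (Fin 2 × Fin 2) ℂ) (M : Matrix Q3 Q3 ℂ) :
    ptB (M * (liftCA V)ᴴ) = ptB M * (liftCA V)ᴴ := by
  ext ⟨i1, i2, i3⟩ ⟨j1, j2, j3⟩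
  fin_cases i3 <;> fin_cases j3 <;>
  simp [ptB, liftCA, Matrix.mul_apply, Matrix.conjTranspose_apply, Fintype.sum_prod_type,
    mul_ite, ite_mul, Finset.sum_ite_eq, Finset.sum_ite_eq']

/-- with s11 = 0, if the partial transpose of ρ_ABC = U(ρ_AB ⊗ ρ_C)U† over
qubit C is positive semidefinite, then so is the partial transpose over qubit A. -/
theorem stmt5 (s01 s10 s : ℝ) (hs : |s| ≤ 1)
    (hAB : (bellDiag s01 s10 0).PosSemidef)
    (V : Matrix (Fin 2 × Fin 2) (Fin 2 × Fin 2) ℂ)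
    (hV : V ∈ Matrix.unitaryGroup (Fin 2 × Fin 2) ℂ)
    (hppt : (ptC (liftCA V * tensC_AB (rhoC s) (bellDiag s01 s10 0) * (liftCA V)ᴴ)).PosSemidef) :
    (ptA (liftCA V * tensC_AB (rhoC s) (bellDiag s01 s10 0) * (liftCA V)ᴴ)).PosSemidef := by
  set T := tensC_AB (rhoC s) (bellDiag s01 s10 0) with hT
  have hB : ptB (liftCA V * T * (liftCA V)ᴴ) = liftCA V * T * (liftCA V)ᴴ := by
    rw [mul_assoc, ptB_mul_left, ptB_mul_right, hT, ptB_tens, pt2_bell, ← mul_assoc]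
  rw [ptA_eq_ptC_ptB, hB]
  exact hppt.transpose
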